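/- The Farey map is topologically conjugate to the tent map: there exists a homeomorphism h : [0,1] → [0,1] with h(0) = 0 and h(1) = 1 such that h(F(x)) = Tent(h(x)) for all x ∈ [0,1], where Tent(x) = 2x for x ∈ [0,1/2] and Tent(x) = 2 − 2x for x ∈ [1/2,1]. -/

import Mathlib

/-- The Farey map `F : [0,1] → [0,1]`: `F x = x/(1-x)` for `x ≤ 1/2` and
`F x = (1-x)/x` for `x ≥ 1/2`. -/
noncomputable def fareyMap : ℝ → ℝ := fun x => if x ≤ 1 / 2 then x / (1 - x) else (1 - x) / x

/-- The tent map `Tent : [0,1] → [0,1]`: `Tent x = 2x` for `x ≤ 1/2` and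
`Tent x = 2 - 2x` for `x ≥ 1/2`. -/
noncomputable def tentMap : ℝ → ℝ := fun x => if x ≤ 1 / 2 then 2 * x else 2 - 2 * x

/-!
The conjugacy is Minkowski's question-mark function `?`. The equation `h ∘ F = Tent ∘ h` says
`h x = h (F x) / 2` for `x ≤ 1/2` and `h x = 1 - h (F x) / 2` for `x ≥ 1/2`; the right-hand side
halves uniform distances on `[0,1]`, so iterating it from `id` converges uniformly to a continuous
monotone solution fixing `0` and `1`.

This solution is strictly monotone. If it were constant on `[a, b]`, take a rational `r ∈ [a, b]`:
the Euclidean algorithm gives `F^[n] r = 1`, and as `F^[n]` is finite-to-one some `x ∈ [a, b]` has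
`y = F^[n] x < 1` and `? y = Tent^[n] (? r) = ? 1 = 1`. Then `?` vanishes at `F (max y (1/2)) > 0`,
hence at some `1 / (k + 1)`, and `F^[k] (1 / (k + 1)) = 1` forces `? 1 = Tent^[k] 0 = 0`.
-/

open Set Filter Topology

lemma fareyMap_of_le_half {x : ℝ} (hx : x ≤ 1 / 2) : fareyMap x = x / (1 - x) := if_pos hx

lemma fareyMap_of_half_le {x : ℝ} (hx : 1 / 2 ≤ x) : fareyMap x = (1 - x) / x := by
  rcases hx.eq_or_lt with rfl | hlt
  · norm_num [fareyMap]
  · exact if_neg hlt.not_ge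

lemma fareyMap_zero : fareyMap 0 = 0 := by norm_num [fareyMap]

lemma fareyMap_one : fareyMap 1 = 0 := by norm_num [fareyMap]

lemma fareyMap_half : fareyMap (1 / 2) = 1 := by norm_num [fareyMap]

lemma fareyMap_le_one (x : ℝ) : fareyMap x ≤ 1 := by
  rcases le_or_gt x (1 / 2) with hx | hx
  · rw [fareyMap_of_le_half hx, div_le_one (by linarith)]; linarith
  · rw [fareyMap_of_half_le hx.le, div_le_one (by linarith)]; linarith

lemma mapsTo_fareyMap : MapsTo fareyMap (Icc 0 1) (Icc 0 1) := by
  rintro x ⟨hx0, hx1⟩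
  refine ⟨?_, fareyMap_le_one x⟩
  rcases le_or_gt x (1 / 2) with hx | hx
  · rw [fareyMap_of_le_half hx]; exact div_nonneg hx0 (by linarith)
  · rw [fareyMap_of_half_le hx.le]; exact div_nonneg (by linarith) (by linarith)

lemma continuous_fareyMap : Continuous fareyMap :=
  continuous_if_le continuous_id continuous_const
    (continuousOn_id.div (continuousOn_const.sub continuousOn_id) fun x (hx : x ≤ 1 / 2) => by
      linarith)
    ((continuousOn_const.sub continuousOn_id).div continuousOn_id fun x (hx : 1 / 2 ≤ x) => by
      linarith)
    fun x (hx : x = 1 / 2) => by subst hx; norm_num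

lemma monotoneOn_fareyMap : MonotoneOn fareyMap (Iic (1 / 2)) := by
  intro x hx y hy hxy
  rw [mem_Iic] at hx hy
  rw [fareyMap_of_le_half hx, fareyMap_of_le_half hy, div_le_div_iff₀ (by linarith) (by linarith)]
  nlinarith

lemma antitoneOn_fareyMap : AntitoneOn fareyMap (Ici (1 / 2)) := by
  intro x hx y hy hxy
  rw [mem_Ici] at hx hy
  rw [fareyMap_of_half_le hx, fareyMap_of_half_le hy, div_le_div_iff₀ (by linarith) (by linarith)]
  nlinarith

lemma fareyMap_one_div_add_two (k : ℕ) : fareyMap (1 / (k + 2)) = 1 / (k + 1) := by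
  have hk : (1 : ℝ) / (k + 2) ≤ 1 / 2 := by gcongr; linarith [k.cast_nonneg (α := ℝ)]
  have hk2 : (k : ℝ) + 2 - 1 = k + 1 := by ring
  rw [fareyMap_of_le_half hk, one_sub_div (by positivity),
    div_div_div_cancel_right₀ (by positivity), hk2]

lemma iterate_fareyMap_one_div (k : ℕ) : fareyMap^[k] (1 / (k + 1)) = 1 := by
  induction k with
  | zero => norm_num
  | succ k ih =>
    rw [Function.iterate_succ_apply, Nat.cast_succ, add_assoc, one_add_one_eq_two,
      fareyMap_one_div_add_two, ih]

lemma fareyMap_preimage_singleton_subset (y : ℝ) :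
    fareyMap ⁻¹' {y} ⊆ {y / (1 + y), 1 / (1 + y)} := by
  rintro x rfl
  simp only [mem_insert_iff, mem_singleton_iff]
  rcases le_or_gt x (1 / 2) with hx | hx
  · left
    rw [fareyMap_of_le_half hx]
    have : 1 - x ≠ 0 := by linarith
    field_simp
    ring
  · right
    rw [fareyMap_of_half_le hx.le]
    have : x ≠ 0 := by linarith
    field_simp
    ring

lemma finite_preimage_iterate_fareyMap (n : ℕ) (y : ℝ) : (fareyMap^[n] ⁻¹' {y}).Finite := by
  induction n with
  | zero => exact finite_singleton y
  | succ n ih =>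
    rw [Function.iterate_succ, preimage_comp]
    exact ih.preimage' fun b _ => ((finite_singleton _).insert _).subset
      (fareyMap_preimage_singleton_subset b)

lemma exists_iterate_fareyMap_natCast_div_eq_one {p q : ℕ} (hp : 0 < p) (hpq : p ≤ q) :
    ∃ n, fareyMap^[n] (p / q) = 1 := by
  induction q using Nat.strong_induction_on generalizing p with
  | _ q ih =>
  rcases hpq.eq_or_lt with rfl | hlt
  · exact ⟨0, div_self (by positivity)⟩
  have hp' : (0 : ℝ) < p := by exact_mod_cast hp
  have hq' : (0 : ℝ) < q := by exact_mod_cast hp.trans hlt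
  have hsub : ((q - p : ℕ) : ℝ) = q - p := Nat.cast_sub hpq
  by_cases h2 : 2 * p ≤ q
  · obtain ⟨n, hn⟩ := ih (q - p) (by omega) hp (by omega)
    have hle : (p : ℝ) / q ≤ 1 / 2 := by
      rw [div_le_div_iff₀ hq' two_pos]; exact_mod_cast (by omega : p * 2 ≤ 1 * q)
    refine ⟨n + 1, ?_⟩
    rw [Function.iterate_succ_apply, fareyMap_of_le_half hle]
    convert hn using 2
    rw [hsub]
    have : (q : ℝ) - p ≠ 0 := by linarith [(by exact_mod_cast hlt : (p : ℝ) < q)]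
    field_simp
  · obtain ⟨n, hn⟩ := ih p hlt (by omega : 0 < q - p) (by omega)
    have hge : 1 / 2 ≤ (p : ℝ) / q := by
      rw [div_le_div_iff₀ two_pos hq']; exact_mod_cast (by omega : 1 * q ≤ p * 2)
    refine ⟨n + 1, ?_⟩
    rw [Function.iterate_succ_apply, fareyMap_of_half_le hge]
    convert hn using 2
    rw [hsub]
    field_simp

lemma exists_iterate_fareyMap_ratCast_eq_one {r : ℚ} (hr0 : 0 < r) (hr1 : r ≤ 1) :
    ∃ n, fareyMap^[n] r = 1 := by
  obtain ⟨p, hp⟩ := Int.eq_ofNat_of_zero_le (Rat.num_pos.2 hr0).le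
  have hcast : (r : ℝ) = p / r.den := by rw [Rat.cast_def, hp, Int.cast_natCast]
  have hpos : 0 < p := by have := Rat.num_pos.2 hr0; omega
  have hle : p ≤ r.den := by
    have : (p : ℝ) / r.den ≤ 1 := hcast ▸ (by exact_mod_cast hr1)
    rw [div_le_one (by exact_mod_cast r.pos)] at this
    exact_mod_cast this
  exact hcast ▸ exists_iterate_fareyMap_natCast_div_eq_one hpos hle

lemma continuous_tentMap : Continuous tentMap :=
  Continuous.if_le (by fun_prop) (by fun_prop) continuous_id continuous_const
    fun x (hx : x = 1 / 2) => by norm_num [hx]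

/-- `h ∘ F = Tent ∘ h` solved for `h x`, using the branch of `Tent⁻¹` on the side of `x`. -/
noncomputable def fareyConjStep (f : ℝ → ℝ) (x : ℝ) : ℝ :=
  if x ≤ 1 / 2 then f (fareyMap x) / 2 else 1 - f (fareyMap x) / 2

structure IsNormalizedMonotone (f : ℝ → ℝ) : Prop where
  continuous : Continuous f
  monotone : Monotone f
  map_zero : f 0 = 0
  map_one : f 1 = 1

namespace IsNormalizedMonotone

variable {f : ℝ → ℝ}

lemma mapsTo_Icc (hf : IsNormalizedMonotone f) : MapsTo f (Icc 0 1) (Icc 0 1) := fun _ hx =>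
  ⟨hf.map_zero ▸ hf.monotone hx.1, hf.map_one ▸ hf.monotone hx.2⟩

lemma apply_fareyMap_le_one (hf : IsNormalizedMonotone f) (x : ℝ) : f (fareyMap x) ≤ 1 :=
  hf.map_one ▸ hf.monotone (fareyMap_le_one x)

lemma fareyConjStep (hf : IsNormalizedMonotone f) : IsNormalizedMonotone (fareyConjStep f) where
  continuous := by
    have hc := hf.continuous.comp continuous_fareyMap
    refine Continuous.if_le (hc.div_const 2) (continuous_const.sub (hc.div_const 2))
      continuous_id continuous_const fun x (hx : x = 1 / 2) => ?_
    simp only [hx, fareyMap_half, hf.map_one]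
    norm_num
  monotone := by
    intro x y hxy
    unfold _root_.fareyConjStep
    split_ifs with hx hy hy
    · linarith [hf.monotone (monotoneOn_fareyMap hx hy hxy)]
    · linarith [hf.apply_fareyMap_le_one x, hf.apply_fareyMap_le_one y]
    · exact absurd (hxy.trans hy) hx
    · have hx' : 1 / 2 ≤ x := le_of_not_ge hx
      linarith [hf.monotone (antitoneOn_fareyMap hx' (hx'.trans hxy) hxy)]
  map_zero := by simp [_root_.fareyConjStep, fareyMap_zero, hf.map_zero]
  map_one := by norm_num [_root_.fareyConjStep, fareyMap_one, hf.map_zero]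

end IsNormalizedMonotone

lemma tentMap_fareyConjStep {f : ℝ → ℝ} {x : ℝ} (hfx : f (fareyMap x) ≤ 1) :
    tentMap (fareyConjStep f x) = f (fareyMap x) := by
  unfold fareyConjStep tentMap
  split_ifs <;> linarith

lemma abs_fareyConjStep_sub (f g : ℝ → ℝ) (x : ℝ) :
    |fareyConjStep f x - fareyConjStep g x| = |f (fareyMap x) - g (fareyMap x)| / 2 := by
  unfold fareyConjStep
  split_ifs
  · rw [← sub_div, abs_div, abs_two]
  · rw [sub_sub_sub_cancel_left, ← sub_div, abs_div, abs_two, abs_sub_comm]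

noncomputable def questionMarkApprox (n : ℕ) : ℝ → ℝ := fareyConjStep^[n] id

lemma questionMarkApprox_succ (n : ℕ) :
    questionMarkApprox (n + 1) = fareyConjStep (questionMarkApprox n) :=
  Function.iterate_succ_apply' _ _ _

lemma isNormalizedMonotone_questionMarkApprox (n : ℕ) :
    IsNormalizedMonotone (questionMarkApprox n) := by
  induction n with
  | zero => exact ⟨continuous_id, monotone_id, rfl, rfl⟩
  | succ n ih => exact questionMarkApprox_succ n ▸ ih.fareyConjStep

lemma abs_questionMarkApprox_succ_sub_le (n : ℕ) {x : ℝ} (hx : x ∈ Icc 0 1) :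
    |questionMarkApprox (n + 1) x - questionMarkApprox n x| ≤ (1 / 2) ^ n := by
  induction n generalizing x with
  | zero =>
    have h1 := (isNormalizedMonotone_questionMarkApprox (0 + 1)).mapsTo_Icc hx
    change |questionMarkApprox (0 + 1) x - x| ≤ (1 / 2) ^ 0
    rw [pow_zero, abs_sub_le_iff]
    exact ⟨by linarith [h1.2, hx.1], by linarith [h1.1, hx.2]⟩
  | succ n ih =>
    have h := abs_fareyConjStep_sub (questionMarkApprox (n + 1)) (questionMarkApprox n) x
    rw [← questionMarkApprox_succ, ← questionMarkApprox_succ] at h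
    rw [h, pow_succ]
    linarith [ih (mapsTo_fareyMap hx)]

/-- Minkowski's question-mark function on `[0,1]` (its values outside `[0,1]` are junk). -/
noncomputable def questionMark (x : ℝ) : ℝ := limUnder atTop fun n => questionMarkApprox n x

lemma cauchySeq_questionMarkApprox {x : ℝ} (hx : x ∈ Icc 0 1) :
    CauchySeq fun n => questionMarkApprox n x :=
  cauchySeq_of_le_geometric (1 / 2) 1 (by norm_num) fun n => by
    rw [dist_comm, Real.dist_eq, one_mul]
    exact abs_questionMarkApprox_succ_sub_le n hx

lemma tendsto_questionMarkApprox {x : ℝ} (hx : x ∈ Icc 0 1) :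
    Tendsto (fun n => questionMarkApprox n x) atTop (𝓝 (questionMark x)) :=
  (cauchySeq_questionMarkApprox hx).tendsto_limUnder

lemma tendstoUniformlyOn_questionMarkApprox :
    TendstoUniformlyOn questionMarkApprox questionMark atTop (Icc 0 1) := by
  rw [Metric.tendstoUniformlyOn_iff]
  intro ε hε
  have hgeom := ((tendsto_pow_atTop_nhds_zero_of_lt_one (r := (1 / 2 : ℝ)) (by norm_num)
    (by norm_num)).const_mul 1).div_const (1 - 1 / 2)
  rw [mul_zero, zero_div] at hgeom
  filter_upwards [hgeom.eventually (gt_mem_nhds hε)] with n hn x hx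
  rw [dist_comm]
  refine (dist_le_of_le_geometric_of_tendsto (1 / 2) 1 (by norm_num) (fun k => ?_)
    (tendsto_questionMarkApprox hx) n).trans_lt hn
  rw [dist_comm, Real.dist_eq, one_mul]
  exact abs_questionMarkApprox_succ_sub_le k hx

lemma continuousOn_questionMark : ContinuousOn questionMark (Icc 0 1) :=
  tendstoUniformlyOn_questionMarkApprox.continuousOn <| Frequently.of_forall fun n =>
    (isNormalizedMonotone_questionMarkApprox n).continuous.continuousOn

lemma questionMark_zero : questionMark 0 = 0 :=
  tendsto_nhds_unique (tendsto_questionMarkApprox (by norm_num)) <| by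
    simp only [fun n => (isNormalizedMonotone_questionMarkApprox n).map_zero, tendsto_const_nhds]

lemma questionMark_one : questionMark 1 = 1 :=
  tendsto_nhds_unique (tendsto_questionMarkApprox (by norm_num)) <| by
    simp only [fun n => (isNormalizedMonotone_questionMarkApprox n).map_one, tendsto_const_nhds]

lemma monotoneOn_questionMark : MonotoneOn questionMark (Icc 0 1) := fun _ hx _ hy hxy =>
  le_of_tendsto_of_tendsto' (tendsto_questionMarkApprox hx) (tendsto_questionMarkApprox hy)
    fun n => (isNormalizedMonotone_questionMarkApprox n).monotone hxy

lemma mapsTo_questionMark : MapsTo questionMark (Icc 0 1) (Icc 0 1) := fun _ hx =>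
  isClosed_Icc.mem_of_tendsto (tendsto_questionMarkApprox hx) <| Eventually.of_forall fun n =>
    (isNormalizedMonotone_questionMarkApprox n).mapsTo_Icc hx

lemma questionMark_fareyMap {x : ℝ} (hx : x ∈ Icc 0 1) :
    questionMark (fareyMap x) = tentMap (questionMark x) := by
  refine tendsto_nhds_unique (tendsto_questionMarkApprox (mapsTo_fareyMap hx)) ?_
  have hlim := (continuous_tentMap.tendsto _).comp
    ((tendsto_questionMarkApprox hx).comp (tendsto_add_atTop_nat 1))
  refine hlim.congr fun n => ?_
  simp only [Function.comp_apply, questionMarkApprox_succ]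
  exact tentMap_fareyConjStep ((isNormalizedMonotone_questionMarkApprox n).apply_fareyMap_le_one x)

lemma questionMark_iterate_fareyMap {x : ℝ} (hx : x ∈ Icc 0 1) (n : ℕ) :
    questionMark (fareyMap^[n] x) = tentMap^[n] (questionMark x) := by
  induction n with
  | zero => rfl
  | succ n ih =>
    rw [Function.iterate_succ_apply', Function.iterate_succ_apply',
      questionMark_fareyMap (mapsTo_fareyMap.iterate n hx), ih]

lemma questionMark_pos {x : ℝ} (hx0 : 0 < x) (hx1 : x ≤ 1) : 0 < questionMark x := by
  obtain ⟨k, hk⟩ := exists_nat_one_div_lt hx0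
  have hk_mem : (1 : ℝ) / (k + 1) ∈ Icc 0 1 :=
    ⟨by positivity,
      div_le_one_of_le₀ (by linarith [k.cast_nonneg (α := ℝ)]) (by positivity)⟩
  by_contra! hle
  have h0 : questionMark (1 / (k + 1)) = 0 :=
    ((monotoneOn_questionMark hk_mem ⟨hx0.le, hx1⟩ hk.le).trans hle).antisymm
      (mapsTo_questionMark hk_mem).1
  have h1 := questionMark_iterate_fareyMap hk_mem k
  rw [iterate_fareyMap_one_div, questionMark_one, h0,
    Function.iterate_fixed (by norm_num [tentMap] : tentMap 0 = 0)] at h1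
  exact one_ne_zero h1

lemma questionMark_lt_one {x : ℝ} (hx0 : 0 ≤ x) (hx1 : x < 1) : questionMark x < 1 := by
  set z := max x (1 / 2)
  have hz : z ∈ Icc 0 1 := ⟨by positivity, max_le hx1.le (by norm_num)⟩
  by_contra! hge
  have hz1 : questionMark z = 1 := (mapsTo_questionMark hz).2.antisymm
    (hge.trans (monotoneOn_questionMark ⟨hx0, hx1.le⟩ hz (le_max_left _ _)))
  have hFz : 0 < fareyMap z := by
    rw [fareyMap_of_half_le (le_max_right _ _)]
    exact div_pos (sub_pos.2 (max_lt hx1 (by norm_num))) (by positivity)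
  have hconj := questionMark_fareyMap hz
  rw [hz1, show tentMap 1 = 0 by norm_num [tentMap]] at hconj
  exact (questionMark_pos hFz (fareyMap_le_one z)).ne' hconj

lemma strictMonoOn_questionMark : StrictMonoOn questionMark (Icc 0 1) := by
  intro a ha b hb hab
  refine (monotoneOn_questionMark ha hb hab.le).lt_of_ne fun heq => ?_
  have hsub : Icc a b ⊆ Icc 0 1 := Icc_subset_Icc ha.1 hb.2
  have hconst : ∀ x ∈ Icc a b, questionMark x = questionMark a := fun x hx =>
    le_antisymm (heq ▸ monotoneOn_questionMark (hsub hx) hb hx.2)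
      (monotoneOn_questionMark ha (hsub hx) hx.1)
  obtain ⟨r, har, hrb⟩ := exists_rat_btwn hab
  have hr : (r : ℝ) ∈ Icc a b := ⟨har.le, hrb.le⟩
  obtain ⟨n, hn⟩ := exists_iterate_fareyMap_ratCast_eq_one
    (by exact_mod_cast ha.1.trans_lt har) (by exact_mod_cast hrb.le.trans hb.2)
  obtain ⟨x, hx, hxn⟩ : ∃ x ∈ Icc a b, fareyMap^[n] x ≠ 1 := by
    by_contra! h
    exact Icc_infinite hab ((finite_preimage_iterate_fareyMap n 1).subset h)
  have hy := mapsTo_fareyMap.iterate n (hsub hx)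
  refine (questionMark_lt_one hy.1 (hy.2.lt_of_ne hxn)).ne ?_
  rw [questionMark_iterate_fareyMap (hsub hx), hconst x hx, ← hconst r hr,
    ← questionMark_iterate_fareyMap (hsub hr), hn, questionMark_one]

lemma surjOn_questionMark : SurjOn questionMark (Icc 0 1) (Icc 0 1) := by
  simpa only [questionMark_zero, questionMark_one] using
    continuousOn_questionMark.surjOn_Icc (a := 0) (b := 1) (by norm_num) (by norm_num)

section ExtendById

variable {α : Type*} [LinearOrder α] {f : α → α} {a b : α}

lemma StrictMonoOn.strictMono_piecewise_id (hf : StrictMonoOn f (Icc a b)) (ha : f a = a)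
    (hb : f b = b) : StrictMono ((Icc a b).piecewise f id) := by
  intro x y hxy
  by_cases hx : x ∈ Icc a b <;> by_cases hy : y ∈ Icc a b <;>
    simp only [piecewise_eq_of_mem, piecewise_eq_of_notMem, hx, hy, id, not_false_eq_true]
  · exact hf hx hy hxy
  · have hby : b < y := by
      by_contra! h; exact hy ⟨hx.1.trans hxy.le, h⟩
    exact (hb ▸ hf.monotoneOn hx ⟨hx.1.trans hx.2, le_rfl⟩ hx.2).trans_lt hby
  · have hxa : x < a := by
      by_contra! h; exact hx ⟨h, hxy.le.trans hy.2⟩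
    exact hxa.trans_le (ha ▸ hf.monotoneOn ⟨le_rfl, hy.1.trans hy.2⟩ hy hy.1)
  · exact hxy

lemma Set.SurjOn.surjective_piecewise_id (hf : SurjOn f (Icc a b) (Icc a b)) :
    Function.Surjective ((Icc a b).piecewise f id) := by
  intro y
  by_cases hy : y ∈ Icc a b
  · obtain ⟨x, hx, rfl⟩ := hf hy
    exact ⟨x, piecewise_eq_of_mem _ _ _ hx⟩
  · exact ⟨y, piecewise_eq_of_notMem _ _ _ hy⟩

end ExtendById

/-- Extended by the identity outside `[0,1]`, `?` is an order automorphism of `ℝ`, so its inverse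
is continuous for free. -/
noncomputable def questionMarkOrderIso : ℝ ≃o ℝ :=
  StrictMono.orderIsoOfSurjective _
    (strictMonoOn_questionMark.strictMono_piecewise_id questionMark_zero questionMark_one)
    surjOn_questionMark.surjective_piecewise_id

lemma questionMarkOrderIso_eqOn : EqOn questionMarkOrderIso questionMark (Icc 0 1) :=
  fun _ hx => piecewise_eq_of_mem _ _ _ hx

/-- The Farey map is topologically conjugate to the tent map: there is a homeomorphism
`h : [0,1] → [0,1]` (given with its continuous inverse `g`) fixing `0` and `1` with
`h ∘ F = Tent ∘ h` on `[0,1]`. -/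
theorem fareyMap_topologically_conjugate_tentMap :
    ∃ h g : ℝ → ℝ,
      ContinuousOn h (Set.Icc (0 : ℝ) 1) ∧ ContinuousOn g (Set.Icc (0 : ℝ) 1) ∧
      Set.MapsTo h (Set.Icc (0 : ℝ) 1) (Set.Icc (0 : ℝ) 1) ∧
      Set.MapsTo g (Set.Icc (0 : ℝ) 1) (Set.Icc (0 : ℝ) 1) ∧
      (∀ x ∈ Set.Icc (0 : ℝ) 1, g (h x) = x) ∧
      (∀ y ∈ Set.Icc (0 : ℝ) 1, h (g y) = y) ∧
      h 0 = 0 ∧ h 1 = 1 ∧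
      (∀ x ∈ Set.Icc (0 : ℝ) 1, h (fareyMap x) = tentMap (h x)) := by
  set e := questionMarkOrderIso
  have he0 : e 0 = 0 := (questionMarkOrderIso_eqOn (by norm_num)).trans questionMark_zero
  have he1 : e 1 = 1 := (questionMarkOrderIso_eqOn (by norm_num)).trans questionMark_one
  have hmapsTo (φ : ℝ ≃o ℝ) (h0 : φ 0 = 0) (h1 : φ 1 = 1) :
      MapsTo φ (Icc 0 1) (Icc 0 1) :=
    fun _ hx => ⟨h0 ▸ φ.monotone hx.1, h1 ▸ φ.monotone hx.2⟩
  refine ⟨e, e.symm, e.continuous.continuousOn, e.symm.continuous.continuousOn,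
    hmapsTo e he0 he1,
    hmapsTo e.symm (e.symm_apply_eq.2 he0.symm) (e.symm_apply_eq.2 he1.symm),
    fun x _ => e.symm_apply_apply x, fun y _ => e.apply_symm_apply y, he0, he1, fun x hx => ?_⟩
  rw [questionMarkOrderIso_eqOn (mapsTo_fareyMap hx), questionMarkOrderIso_eqOn hx,
    questionMark_fareyMap hx]
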